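/- arXiv:1809.05593 — 2 statements merged into one kernel-verified Lean document; each statement's English description precedes it below -/
import Mathlib

section
/- Let H = {x ∈ ℝ⁴ : x₁ > 0} be the open upper half-space, let u be a smooth real-valued function on H, and let a ≥ 0 be a constant. Assume that on H: (i) Δu(x) = −a·x₁; (ii) x₁·Δu(x) = 2·∂₁u(x); and (iii) −Δu − |∇u|² ≥ 0. Then a = 0 and u is constant on H. (Intermediate step in the paper's Liouville argument: from (i) and (ii), ∂₁u = −a·x₁²/2, hence |∇u|² ≥ a²x₁⁴/4, and the inequality a·x₁ − a²x₁⁴/4 ≥ 0 for all x₁ > 0 forces a = 0; then |∇u|² ≤ −Δu = 0, so u is constant on the connected set H.) -/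
/-!
By (i) and (ii), `∂₁u = x₁ Δu / 2 = -a x₁² / 2`, so (iii) gives `a² x₁⁴ / 4 ≤ |∇u|² ≤ -Δu = a x₁`
for every `x₁ > 0`. Letting `x₁ → ∞` forces `a = 0`; then `|∇u|² ≤ 0`, so `u` has vanishing
derivative on the connected open half-space and is constant there.
-/

/-- The Euclidean Laplacian on `ℝ⁴`: the sum of the pure second partial derivatives. -/
noncomputable def lap (u : EuclideanSpace ℝ (Fin 4) → ℝ) (x : EuclideanSpace ℝ (Fin 4)) : ℝ :=
  ∑ i : Fin 4,
    iteratedFDeriv ℝ 2 u x ![EuclideanSpace.single i (1 : ℝ), EuclideanSpace.single i (1 : ℝ)]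

open InnerProductSpace

lemma abs_fderiv_apply_le_norm_gradient_mul {F : Type*} [NormedAddCommGroup F]
    [InnerProductSpace ℝ F] [CompleteSpace F] (f : F → ℝ) (x v : F) :
    |fderiv ℝ f x v| ≤ ‖gradient f x‖ * ‖v‖ := by
  rw [← inner_gradient_left]
  exact abs_real_inner_le_norm _ _

lemma eq_zero_of_forall_pos_sq_mul_pow_four_le {a : ℝ}
    (h : ∀ t : ℝ, 0 < t → a ^ 2 * t ^ 4 ≤ 4 * a * t) : a = 0 := by
  have ha_nonneg : 0 ≤ a := by nlinarith [h 1 one_pos, sq_nonneg a]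
  by_contra hne
  have ha : 0 < a := lt_of_le_of_ne ha_nonneg (Ne.symm hne)
  -- at `t = 4 / a + 1 > 1` we get `a t³ ≥ a t = 4 + a > 4`
  set t := 4 / a + 1 with ht_def
  have hat : a * t = 4 + a := by rw [ht_def]; field_simp
  have ht : 1 < t := by linarith [show 0 < 4 / a by positivity]
  have hcube : a * t ≤ a * t ^ 3 := by gcongr; exact le_self_pow₀ ht.le (by norm_num)
  nlinarith [h t (by linarith)]

section HalfSpace

variable {ι : Type*} (i : ι)

lemma isOpen_setOf_pos_apply : IsOpen {x : EuclideanSpace ℝ ι | 0 < x i} :=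
  isOpen_lt continuous_const (EuclideanSpace.proj i).continuous

lemma convex_setOf_pos_apply : Convex ℝ {x : EuclideanSpace ℝ ι | 0 < x i} :=
  (convex_Ioi 0).linear_preimage (EuclideanSpace.proj i).toLinearMap

end HalfSpace

theorem liouville_step_general (u : EuclideanSpace ℝ (Fin 4) → ℝ) (a : ℝ)
    (hsmooth : ContDiffOn ℝ (⊤ : ℕ∞) u {x : EuclideanSpace ℝ (Fin 4) | 0 < x 0})
    (h1 : ∀ x : EuclideanSpace ℝ (Fin 4), 0 < x 0 → lap u x = -a * x 0)
    (h2 : ∀ x : EuclideanSpace ℝ (Fin 4), 0 < x 0 →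
      x 0 * lap u x = 2 * fderiv ℝ u x (EuclideanSpace.single 0 (1 : ℝ)))
    (h3 : ∀ x : EuclideanSpace ℝ (Fin 4), 0 < x 0 →
      0 ≤ - lap u x - ‖gradient u x‖ ^ 2) :
    a = 0 ∧ ∃ c : ℝ, ∀ x : EuclideanSpace ℝ (Fin 4), 0 < x 0 → u x = c := by
  have hgrad : ∀ x : EuclideanSpace ℝ (Fin 4), 0 < x 0 → ‖gradient u x‖ ^ 2 ≤ a * x 0 := by
    intro x hx
    linarith [h1 x hx, h3 x hx]
  have hpoint : ∀ x : EuclideanSpace ℝ (Fin 4), 0 < x 0 → a ^ 2 * x 0 ^ 4 ≤ 4 * a * x 0 := by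
    intro x hx
    have hd : fderiv ℝ u x (EuclideanSpace.single 0 1) = -(a * x 0 ^ 2 / 2) := by
      linarith [h1 x hx ▸ h2 x hx]
    have hle := abs_fderiv_apply_le_norm_gradient_mul u x (EuclideanSpace.single 0 1)
    rw [hd, abs_neg, PiLp.norm_single, norm_one, mul_one] at hle
    nlinarith [pow_le_pow_left₀ (abs_nonneg _) hle 2, sq_abs (a * x 0 ^ 2 / 2), hgrad x hx]
  have ha : a = 0 := eq_zero_of_forall_pos_sq_mul_pow_four_le fun t ht => by
    simpa using hpoint (EuclideanSpace.single 0 t) (by simpa using ht)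
  refine ⟨ha, (isOpen_setOf_pos_apply 0).exists_is_const_of_fderiv_eq_zero
    (convex_setOf_pos_apply 0).isPreconnected
    (hsmooth.differentiableOn (by simp)) fun x hx => ?_⟩
  have hzero : gradient u x = 0 := by
    simpa [ha] using hgrad x hx
  rw [Pi.zero_apply, ← toDual_gradient, hzero, map_zero]

/-- If `u` is smooth on the open half-space `H = {x₁ > 0} ⊆ ℝ⁴`, `a ≥ 0`, and on `H` we
have `Δu = −a·x₁`, `x₁·Δu = 2∂₁u`, and `−Δu − |∇u|² ≥ 0`, then `a = 0` and `u` is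
constant on `H`. -/
theorem liouville_step (u : EuclideanSpace ℝ (Fin 4) → ℝ) (a : ℝ) (ha : 0 ≤ a)
    (hsmooth : ContDiffOn ℝ (⊤ : ℕ∞) u {x : EuclideanSpace ℝ (Fin 4) | 0 < x 0})
    (h1 : ∀ x : EuclideanSpace ℝ (Fin 4), 0 < x 0 → lap u x = -a * x 0)
    (h2 : ∀ x : EuclideanSpace ℝ (Fin 4), 0 < x 0 →
      x 0 * lap u x = 2 * fderiv ℝ u x (EuclideanSpace.single 0 (1 : ℝ)))
    (h3 : ∀ x : EuclideanSpace ℝ (Fin 4), 0 < x 0 →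
      0 ≤ - lap u x - ‖gradient u x‖ ^ 2) :
    a = 0 ∧ ∃ c : ℝ, ∀ x : EuclideanSpace ℝ (Fin 4), 0 < x 0 → u x = c :=
  liouville_step_general u a hsmooth h1 h2 h3
end

section
/- Let (X, d) be a metric space, μ a Borel measure on X, x ∈ X, and let C > 0 and v > 0 be constants. Assume: (i) μ(B(x,1)) ≥ v; and (ii) for every s > 0, (s/2)²·μ(B(x, s/2))^{1/2} ≤ C·μ(B(x, s)). Then there exists a constant c > 0, depending only on C and v, such that μ(B(x, s)) ≥ c·s⁴ for all s ≥ 1. (This is the iteration lemma proved inline in Step 4 of the paper's diameter bound: the Euclidean-type Sobolev inequality applied to the test functions U(y) = max(s − d(y,x), 0) yields exactly hypothesis (ii), and iterating it doubling the radius from scale 1 gives Euclidean volume growth of balls.) -/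
/-!
Write `V(s) = μ(B(x,s))` and `a = min(√v, 1/(16C))`. If `V(r) ≥ a² r⁴`, then (ii) at `s = 2r`
gives `C·V(2r) ≥ r²·V(r)^{1/2} ≥ a r⁴ ≥ 16 C a² r⁴ = C·a²(2r)⁴`, so the bound `V(r) ≥ a² r⁴`,
true at `r = 1` by (i), propagates to all radii `2ⁿ`; monotonicity of `V` fills the gaps between
dyadic radii at the cost of a factor `16`.
-/

open MeasureTheory Metric ENNReal

namespace VolumeGrowth

variable {V : ℝ → ℝ≥0∞} {C a : ℝ}

lemma ofReal_mul_sq_le_rpow_half {r : ℝ} (ha : 0 ≤ a)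
    (h : ENNReal.ofReal (a ^ 2 * r ^ 4) ≤ V r) :
    ENNReal.ofReal (a * r ^ 2) ≤ V r ^ (1 / 2 : ℝ) := by
  rw [one_div, le_rpow_inv_iff two_pos, ofReal_rpow_of_nonneg (by positivity) zero_le_two]
  convert h using 2
  norm_cast
  ring

lemma quartic_lower_bound_two_mul (hC : 0 < C) (ha : 0 ≤ a) (haC : 16 * C * a ≤ 1)
    (hV : ∀ s : ℝ, 0 < s →
      ENNReal.ofReal ((s / 2) ^ 2) * V (s / 2) ^ (1 / 2 : ℝ) ≤ ENNReal.ofReal C * V s)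
    {r : ℝ} (hr : 0 < r) (h : ENNReal.ofReal (a ^ 2 * r ^ 4) ≤ V r) :
    ENNReal.ofReal (a ^ 2 * (2 * r) ^ 4) ≤ V (2 * r) := by
  have hstep := hV (2 * r) (by positivity)
  rw [mul_div_cancel_left₀ r two_ne_zero] at hstep
  have hreal : C * (a ^ 2 * (2 * r) ^ 4) ≤ r ^ 2 * (a * r ^ 2) := by
    have : 0 ≤ a * r ^ 4 := by positivity
    nlinarith
  refine (ENNReal.mul_le_mul_iff_right (ofReal_pos.mpr hC).ne' ofReal_ne_top).mp ?_
  calc ENNReal.ofReal C * ENNReal.ofReal (a ^ 2 * (2 * r) ^ 4)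
      = ENNReal.ofReal (C * (a ^ 2 * (2 * r) ^ 4)) := (ofReal_mul hC.le).symm
    _ ≤ ENNReal.ofReal (r ^ 2 * (a * r ^ 2)) := ofReal_le_ofReal hreal
    _ = ENNReal.ofReal (r ^ 2) * ENNReal.ofReal (a * r ^ 2) := ofReal_mul (by positivity)
    _ ≤ ENNReal.ofReal (r ^ 2) * V r ^ (1 / 2 : ℝ) := by
      gcongr; exact ofReal_mul_sq_le_rpow_half ha h
    _ ≤ ENNReal.ofReal C * V (2 * r) := hstep

lemma quartic_lower_bound_two_pow (hC : 0 < C) (ha : 0 ≤ a) (haC : 16 * C * a ≤ 1)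
    (hV : ∀ s : ℝ, 0 < s →
      ENNReal.ofReal ((s / 2) ^ 2) * V (s / 2) ^ (1 / 2 : ℝ) ≤ ENNReal.ofReal C * V s)
    (h₁ : ENNReal.ofReal (a ^ 2) ≤ V 1) (n : ℕ) :
    ENNReal.ofReal (a ^ 2 * (2 ^ n) ^ 4) ≤ V (2 ^ n) := by
  induction n with
  | zero => simpa using h₁
  | succ n ih =>
    rw [pow_succ' (2 : ℝ) n]
    exact quartic_lower_bound_two_mul hC ha haC hV (by positivity) ih

lemma quartic_lower_bound (hV_mono : Monotone V) (hC : 0 < C) (ha : 0 ≤ a)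
    (haC : 16 * C * a ≤ 1)
    (hV : ∀ s : ℝ, 0 < s →
      ENNReal.ofReal ((s / 2) ^ 2) * V (s / 2) ^ (1 / 2 : ℝ) ≤ ENNReal.ofReal C * V s)
    (h₁ : ENNReal.ofReal (a ^ 2) ≤ V 1) {s : ℝ} (hs : 1 ≤ s) :
    ENNReal.ofReal (a ^ 2 / 16 * s ^ 4) ≤ V s := by
  obtain ⟨n, hn_le, hn_lt⟩ := exists_nat_pow_near hs one_lt_two
  have hs4 : s ^ 4 ≤ 16 * (2 ^ n) ^ 4 := by
    calc s ^ 4 ≤ ((2 : ℝ) ^ (n + 1)) ^ 4 := pow_le_pow_left₀ (by linarith) hn_lt.le 4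
      _ = 16 * (2 ^ n) ^ 4 := by ring
  calc ENNReal.ofReal (a ^ 2 / 16 * s ^ 4) ≤ ENNReal.ofReal (a ^ 2 * (2 ^ n) ^ 4) := by
        apply ofReal_le_ofReal
        nlinarith [sq_nonneg a]
    _ ≤ V (2 ^ n) := quartic_lower_bound_two_pow hC ha haC hV h₁ n
    _ ≤ V s := hV_mono hn_le

end VolumeGrowth

open VolumeGrowth in
/-- **Volume-growth iteration lemma (Step 4 of the diameter bound).**
Given constants `C > 0` and `v > 0`, there is `c > 0` (depending only on `C` and `v`)
such that for every metric space `X` with a Borel measure `μ` and every `x ∈ X` with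
`μ(B(x,1)) ≥ v` and `(s/2)²·μ(B(x,s/2))^{1/2} ≤ C·μ(B(x,s))` for all `s > 0`, one has
`μ(B(x,s)) ≥ c·s⁴` for all `s ≥ 1`. -/
theorem volume_growth_iteration (C v : ℝ) (hC : 0 < C) (hv : 0 < v) :
    ∃ c : ℝ, 0 < c ∧
      ∀ (X : Type) [MetricSpace X] [MeasurableSpace X] [BorelSpace X]
        (μ : Measure X) (x : X),
        ENNReal.ofReal v ≤ μ (ball x 1) →
        (∀ s : ℝ, 0 < s →
          ENNReal.ofReal ((s / 2) ^ 2) * (μ (ball x (s / 2))) ^ (1 / 2 : ℝ) ≤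
            ENNReal.ofReal C * μ (ball x s)) →
        ∀ s : ℝ, 1 ≤ s → ENNReal.ofReal (c * s ^ 4) ≤ μ (ball x s) := by
  set a := min (Real.sqrt v) (1 / (16 * C))
  have ha : 0 < a := lt_min (Real.sqrt_pos.mpr hv) (by positivity)
  have haC : 16 * C * a ≤ 1 := by
    have := min_le_right (Real.sqrt v) (1 / (16 * C))
    rwa [le_div_iff₀ (by positivity), mul_comm] at this
  have ha_sq : a ^ 2 ≤ v := by
    calc a ^ 2 ≤ Real.sqrt v ^ 2 := by gcongr; exact min_le_left _ _
      _ = v := Real.sq_sqrt hv.le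
  refine ⟨a ^ 2 / 16, by positivity, fun X _ _ _ μ x h₁ hV s hs => ?_⟩
  have hV_mono : Monotone fun r => μ (ball x r) := fun r r' hr => measure_mono (ball_subset_ball hr)
  exact quartic_lower_bound hV_mono hC ha.le haC hV ((ofReal_le_ofReal ha_sq).trans h₁) hs
end
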